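/- For n ≥ 1, Σ_{j=0}^{r} (-1)^j·(n/(n-(m-1)j))·C(n-(m-1)j, j)·C(n-mj, r-j) = 0 whenever 1 ≤ r ≤ ⌊n/m⌋ and m ≥ 2. -/

import Mathlib

/-- Binomial coefficient with integer upper argument, valued in `ℚ`. -/
def Bq (x : ℤ) (k : ℕ) : ℚ :=
  (∏ i ∈ Finset.range k, ((x : ℚ) - (i : ℚ))) / (Nat.factorial k : ℚ)

lemma Bq_zero (x : ℤ) : Bq x 0 = 1 := by simp [Bq]

lemma factq_succ (k : ℕ) : (Nat.factorial (k + 1) : ℚ) = ((k : ℚ) + 1) * Nat.factorial k := by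
  push_cast [Nat.factorial_succ]; ring

lemma factq_ne (k : ℕ) : (Nat.factorial k : ℚ) ≠ 0 := by
  exact_mod_cast Nat.cast_ne_zero.mpr (Nat.factorial_ne_zero k)

lemma Bq_succ (x : ℤ) (k : ℕ) :
    Bq x (k + 1) = ((x : ℚ) / (k + 1)) * Bq (x - 1) k := by
  unfold Bq
  rw [Finset.prod_range_succ']
  have h : ∀ i ∈ Finset.range k, ((x : ℚ) - ((i : ℕ) + 1 : ℕ)) = (((x - 1 : ℤ) : ℚ) - i) := by
    intro i _; push_cast; ring
  rw [Finset.prod_congr rfl h, factq_succ]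
  have h1 : ((k : ℚ) + 1) ≠ 0 := by positivity
  have h2 := factq_ne k
  rw [div_mul_div_comm]
  rw [div_eq_div_iff (by exact mul_ne_zero h1 h2) (by exact mul_ne_zero h1 h2)]
  push_cast
  ring

lemma Bq_succ_top (x : ℤ) (k : ℕ) :
    Bq x (k + 1) = Bq x k * (((x : ℚ) - k) / (k + 1)) := by
  unfold Bq
  rw [Finset.prod_range_succ, factq_succ]
  have h1 : ((k : ℚ) + 1) ≠ 0 := by positivity
  have h2 := factq_ne k
  rw [div_mul_div_comm]
  rw [div_eq_div_iff (by exact mul_ne_zero h1 h2) (by exact mul_ne_zero h2 h1)]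
  ring

/-- Pascal's rule for `Bq`. -/
lemma Bq_pascal (x : ℤ) (k : ℕ) :
    Bq x (k + 1) = Bq (x - 1) (k + 1) + Bq (x - 1) k := by
  rw [Bq_succ, Bq_succ_top]
  have h1 : ((k : ℚ) + 1) ≠ 0 := by positivity
  have hc : (((x - 1 : ℤ)) : ℚ) = (x : ℚ) - 1 := by push_cast; ring
  rw [hc]
  field_simp
  ring

lemma Bq_natCast (n k : ℕ) : Bq (n : ℤ) k = (Nat.choose n k : ℚ) := by
  rcases le_or_gt k n with h | h
  · unfold Bq
    have hp : (∏ i ∈ Finset.range k, (((n : ℤ) : ℚ) - (i : ℚ)))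
        = (Nat.descFactorial n k : ℚ) := by
      rw [Nat.descFactorial_eq_prod_range]
      push_cast
      refine Finset.prod_congr rfl ?_
      intro i hi
      have : i ≤ n := le_trans (le_of_lt (Finset.mem_range.mp hi)) h
      push_cast [Nat.cast_sub this]
      ring
    rw [hp, Nat.descFactorial_eq_factorial_mul_choose]
    push_cast
    rw [mul_comm]
    exact mul_div_cancel_right₀ _ (factq_ne k)
  · have hz : Nat.choose n k = 0 := Nat.choose_eq_zero_of_lt h
    rw [hz]
    unfold Bq
    have : (∏ i ∈ Finset.range k, (((n : ℤ) : ℚ) - (i : ℚ))) = 0 := by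
      apply Finset.prod_eq_zero (Finset.mem_range.mpr h)
      simp
    rw [this]
    simp

/-- Integer coefficient `a(ν,j) = C(ν-(m-1)j, j) + (m-1)·C(ν-(m-1)j-1, j-1)`. -/
def aq (m : ℕ) (ν : ℤ) : ℕ → ℚ
  | 0 => 1
  | (j + 1) => Bq (ν - ((m : ℤ) - 1) * (j + 1)) (j + 1)
      + ((m : ℚ) - 1) * Bq (ν - ((m : ℤ) - 1) * (j + 1) - 1) j

/-- The alternating sum. -/
def Tq (m : ℕ) (ν : ℤ) (r : ℕ) : ℚ :=
  ∑ j ∈ Finset.range (r + 1), (-1 : ℚ) ^ j * aq m ν j * Bq (ν - (m : ℤ) * j) (r - j)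

lemma aq_rec (m : ℕ) (ν : ℤ) (j : ℕ) :
    aq m ν (j + 1) = aq m (ν - 1) (j + 1) + aq m (ν - m) j := by
  cases j with
  | zero =>
      show Bq (ν - ((m : ℤ) - 1) * (0 + 1)) (0 + 1)
          + ((m : ℚ) - 1) * Bq (ν - ((m : ℤ) - 1) * (0 + 1) - 1) 0
        = (Bq (ν - 1 - ((m : ℤ) - 1) * (0 + 1)) (0 + 1)
            + ((m : ℚ) - 1) * Bq (ν - 1 - ((m : ℤ) - 1) * (0 + 1) - 1) 0) + 1
      rw [Bq_succ, Bq_succ]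
      simp only [Bq_zero]
      push_cast
      ring
  | succ i =>
      show Bq (ν - ((m : ℤ) - 1) * (i + 1 + 1)) (i + 1 + 1)
          + ((m : ℚ) - 1) * Bq (ν - ((m : ℤ) - 1) * (i + 1 + 1) - 1) (i + 1)
        = (Bq (ν - 1 - ((m : ℤ) - 1) * (i + 1 + 1)) (i + 1 + 1)
            + ((m : ℚ) - 1) * Bq (ν - 1 - ((m : ℤ) - 1) * (i + 1 + 1) - 1) (i + 1))
          + (Bq (ν - (m : ℤ) - ((m : ℤ) - 1) * (i + 1)) (i + 1)
            + ((m : ℚ) - 1) * Bq (ν - (m : ℤ) - ((m : ℤ) - 1) * (i + 1) - 1) i)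
      have e1 : ν - ((m : ℤ) - 1) * ((i : ℤ) + 1 + 1) - 1
          = ν - 1 - ((m : ℤ) - 1) * ((i : ℤ) + 1 + 1) := by ring
      have e2 : ν - (m : ℤ) - ((m : ℤ) - 1) * ((i : ℤ) + 1)
          = ν - ((m : ℤ) - 1) * ((i : ℤ) + 1 + 1) - 1 := by ring
      rw [e2, ← e1]
      have p1 := Bq_pascal (ν - ((m : ℤ) - 1) * ((i : ℤ) + 1 + 1)) (i + 1)
      have p2 := Bq_pascal (ν - ((m : ℤ) - 1) * ((i : ℤ) + 1 + 1) - 1) i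
      linear_combination p1 + ((m : ℚ) - 1) * p2

lemma aq_zero_left (m : ℕ) (j : ℕ) : aq m 0 (j + 1) = 0 := by
  show Bq (0 - ((m : ℤ) - 1) * (j + 1)) (j + 1)
      + ((m : ℚ) - 1) * Bq (0 - ((m : ℤ) - 1) * (j + 1) - 1) j = 0
  rw [Bq_succ]
  have hc : (((0 - ((m : ℤ) - 1) * (j + 1)) : ℤ) : ℚ) = -(((m : ℚ) - 1) * ((j : ℚ) + 1)) := by
    push_cast; ring
  rw [hc]
  have h1 : ((j : ℚ) + 1) ≠ 0 := by positivity
  field_simp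
  ring

lemma Tq_zero (m : ℕ) (ν : ℤ) : Tq m ν 0 = 1 := by
  unfold Tq
  rw [Finset.sum_range_one]
  show (-1 : ℚ) ^ 0 * aq m ν 0 * Bq (ν - (m : ℤ) * 0) (0 - 0) = 1
  rw [show aq m ν 0 = 1 from rfl, Bq_zero]
  ring

lemma Tq_zero_left (m : ℕ) (r : ℕ) : Tq m 0 (r + 1) = 0 := by
  unfold Tq
  apply Finset.sum_eq_zero
  intro j hj
  cases j with
  | zero =>
      rw [show aq m 0 0 = 1 from rfl]
      rw [show ((0 : ℤ) - (m : ℤ) * ((0 : ℕ) : ℤ)) = 0 by push_cast; ring]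
      rw [show r + 1 - 0 = r + 1 from rfl]
      rw [Bq_succ]
      push_cast
      ring
  | succ i =>
      rw [aq_zero_left]
      ring

lemma Tq_rec (m : ℕ) (ν : ℤ) (r : ℕ) :
    Tq m ν (r + 1) = Tq m (ν - 1) (r + 1) + Tq m (ν - 1) r - Tq m (ν - m) r := by
  have hsplit : Tq m ν (r + 1)
      = (∑ j ∈ Finset.range (r + 1 + 1),
            (-1 : ℚ) ^ j * aq m (ν - 1) j * Bq (ν - (m : ℤ) * j) (r + 1 - j))
        + (∑ j ∈ Finset.range (r + 1 + 1),
            (-1 : ℚ) ^ j * (aq m ν j - aq m (ν - 1) j) * Bq (ν - (m : ℤ) * j) (r + 1 - j)) := by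
    rw [← Finset.sum_add_distrib]
    unfold Tq
    apply Finset.sum_congr rfl
    intro j _
    ring
  have hV : (∑ j ∈ Finset.range (r + 1 + 1),
        (-1 : ℚ) ^ j * (aq m ν j - aq m (ν - 1) j) * Bq (ν - (m : ℤ) * j) (r + 1 - j))
      = - Tq m (ν - m) r := by
    rw [Finset.sum_range_succ']
    have h0 : (-1 : ℚ) ^ 0 * (aq m ν 0 - aq m (ν - 1) 0) * Bq (ν - (m : ℤ) * ((0 : ℕ) : ℤ)) (r + 1 - 0) = 0 := by
      rw [show aq m ν 0 = 1 from rfl, show aq m (ν - 1) 0 = 1 from rfl]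
      ring
    rw [h0, add_zero]
    have hterm : ∀ i ∈ Finset.range (r + 1),
        (-1 : ℚ) ^ (i + 1) * (aq m ν (i + 1) - aq m (ν - 1) (i + 1))
            * Bq (ν - (m : ℤ) * ((i + 1 : ℕ) : ℤ)) (r + 1 - (i + 1))
        = - ((-1 : ℚ) ^ i * aq m (ν - m) i * Bq (ν - (m : ℤ) - (m : ℤ) * i) (r - i)) := by
      intro i _
      have ha : aq m ν (i + 1) - aq m (ν - 1) (i + 1) = aq m (ν - m) i := by
        rw [aq_rec]; ring
      have harg : ν - (m : ℤ) * ((i + 1 : ℕ) : ℤ) = ν - (m : ℤ) - (m : ℤ) * i := by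
        push_cast; ring
      have hidx : r + 1 - (i + 1) = r - i := by omega
      rw [ha, harg, hidx, pow_succ]
      ring
    rw [Finset.sum_congr rfl hterm, Finset.sum_neg_distrib]
    rfl
  have hU : (∑ j ∈ Finset.range (r + 1 + 1),
        (-1 : ℚ) ^ j * aq m (ν - 1) j * Bq (ν - (m : ℤ) * j) (r + 1 - j))
      = Tq m (ν - 1) (r + 1) + Tq m (ν - 1) r := by
    rw [Finset.sum_range_succ]
    have hpas : ∀ j ∈ Finset.range (r + 1),
        (-1 : ℚ) ^ j * aq m (ν - 1) j * Bq (ν - (m : ℤ) * j) (r + 1 - j)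
        = (-1 : ℚ) ^ j * aq m (ν - 1) j * Bq (ν - 1 - (m : ℤ) * j) (r + 1 - j)
          + (-1 : ℚ) ^ j * aq m (ν - 1) j * Bq (ν - 1 - (m : ℤ) * j) (r - j) := by
      intro j hj
      have hjr : j ≤ r := by
        have := Finset.mem_range.mp hj; omega
      have hidx : r + 1 - j = (r - j) + 1 := by omega
      rw [hidx, Bq_pascal (ν - (m : ℤ) * j) (r - j)]
      ring
    rw [Finset.sum_congr rfl hpas, Finset.sum_add_distrib]
    have hT1 : Tq m (ν - 1) (r + 1)
        = (∑ j ∈ Finset.range (r + 1),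
            (-1 : ℚ) ^ j * aq m (ν - 1) j * Bq (ν - 1 - (m : ℤ) * j) (r + 1 - j))
          + (-1 : ℚ) ^ (r + 1) * aq m (ν - 1) (r + 1)
              * Bq (ν - 1 - (m : ℤ) * ((r + 1 : ℕ) : ℤ)) (r + 1 - (r + 1)) := by
      unfold Tq
      rw [Finset.sum_range_succ]
    have hT2 : Tq m (ν - 1) r
        = ∑ j ∈ Finset.range (r + 1),
            (-1 : ℚ) ^ j * aq m (ν - 1) j * Bq (ν - 1 - (m : ℤ) * j) (r - j) := rfl
    have hlast : (-1 : ℚ) ^ (r + 1) * aq m (ν - 1) (r + 1)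
            * Bq (ν - (m : ℤ) * ((r + 1 : ℕ) : ℤ)) (r + 1 - (r + 1))
        = (-1 : ℚ) ^ (r + 1) * aq m (ν - 1) (r + 1)
            * Bq (ν - 1 - (m : ℤ) * ((r + 1 : ℕ) : ℤ)) (r + 1 - (r + 1)) := by
      rw [Nat.sub_self, Bq_zero, Bq_zero]
    rw [hlast, hT1, hT2]
    ring
  rw [hsplit, hU, hV]
  ring

lemma shift_zero (f : ℤ → ℚ) (hshift : ∀ ν : ℤ, f ν = f (ν - 1)) (h0 : f 0 = 0) :
    ∀ z : ℤ, f z = 0 := by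
  intro z
  induction z using Int.induction_on with
  | zero => exact h0
  | succ i ih => rw [hshift (i + 1)]; simpa using ih
  | pred i ih => rw [hshift (-(i : ℤ))] at ih; exact ih

lemma Tq_eq_zero (m : ℕ) (r : ℕ) : ∀ z : ℤ, Tq m z (r + 1) = 0 := by
  induction r with
  | zero =>
      apply shift_zero
      · intro ν
        rw [Tq_rec m ν 0, Tq_zero, Tq_zero]
        ring
      · exact Tq_zero_left m 0
  | succ r ih =>
      apply shift_zero
      · intro ν
        rw [Tq_rec m ν (r + 1), ih (ν - 1), ih (ν - m)]
        ring
      · exact Tq_zero_left m (r + 1)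

/-- For `n ≥ 1`, `m ≥ 2` and `1 ≤ r ≤ ⌊n/m⌋`:
`Σ_{j=0}^{r} (-1)^j·(n/(n-(m-1)j))·C(n-(m-1)j, j)·C(n-mj, r-j) = 0`. -/
theorem alternating_binomial_sum_vanishes (n m r : ℕ) (hn : 1 ≤ n) (hm : 2 ≤ m)
    (hr : 1 ≤ r) (hrn : r ≤ n / m) :
    ∑ j ∈ Finset.range (r + 1),
      (-1 : ℚ) ^ j * ((n : ℚ) / ((n : ℚ) - ((m : ℚ) - 1) * (j : ℚ))) *
        (Nat.choose (n - (m - 1) * j) j : ℚ) * (Nat.choose (n - m * j) (r - j) : ℚ) = 0 := by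
  have hmr : m * r ≤ n := by
    have h := (Nat.le_div_iff_mul_le (by omega : 0 < m)).mp hrn
    rwa [Nat.mul_comm] at h
  have hmain : Tq m (n : ℤ) r = 0 := by
    obtain ⟨r', rfl⟩ : ∃ r', r = r' + 1 := ⟨r - 1, by omega⟩
    exact Tq_eq_zero m r' (n : ℤ)
  rw [← hmain]
  unfold Tq
  apply Finset.sum_congr rfl
  intro j hj
  have hjr : j ≤ r := by have := Finset.mem_range.mp hj; omega
  have hmj : m * j ≤ n := le_trans (Nat.mul_le_mul_left m hjr) hmr
  have hm1j : (m - 1) * j ≤ n := le_trans (Nat.mul_le_mul_right j (by omega)) hmj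
  -- second binomial
  have hB2 : (Nat.choose (n - m * j) (r - j) : ℚ) = Bq ((n : ℤ) - (m : ℤ) * j) (r - j) := by
    rw [show (n : ℤ) - (m : ℤ) * j = ((n - m * j : ℕ) : ℤ) by push_cast [Nat.cast_sub hmj]; ring]
    rw [Bq_natCast]
  rw [hB2]
  -- now identify the weight with aq
  have hA : ((n : ℚ) / ((n : ℚ) - ((m : ℚ) - 1) * (j : ℚ))) * (Nat.choose (n - (m - 1) * j) j : ℚ)
      = aq m (n : ℤ) j := by
    cases j with
    | zero =>
        show ((n : ℚ) / ((n : ℚ) - ((m : ℚ) - 1) * ((0 : ℕ) : ℚ)))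
            * (Nat.choose (n - (m - 1) * 0) 0 : ℚ) = 1
        have hn0 : (n : ℚ) ≠ 0 := by positivity
        simp [hn0]
    | succ i =>
        have hmle : (m - 1) * (i + 1) ≤ n := by
          calc (m - 1) * (i + 1) ≤ m * (i + 1) := Nat.mul_le_mul_right _ (by omega)
          _ ≤ n := le_trans (Nat.mul_le_mul_left m (by omega : i + 1 ≤ r)) hmr
        have hxpos : 0 < n - (m - 1) * (i + 1) := by
          have hmi : m * (i + 1) ≤ n := le_trans (Nat.mul_le_mul_left m (by omega : i + 1 ≤ r)) hmr
          have hkey : (i + 1) + (m - 1) * (i + 1) ≤ n := by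
            have h1 : (1 + (m - 1)) * (i + 1) = (i + 1) + (m - 1) * (i + 1) := by ring
            have h2 : 1 + (m - 1) = m := by omega
            calc (i + 1) + (m - 1) * (i + 1) = (1 + (m - 1)) * (i + 1) := h1.symm
            _ = m * (i + 1) := by rw [h2]
            _ ≤ n := hmi
          have hsub : (n - (m - 1) * (i + 1)) + (m - 1) * (i + 1) = n := Nat.sub_add_cancel hmle
          omega
        have hxq : ((n : ℚ) - ((m : ℚ) - 1) * ((i : ℚ) + 1)) = ((n - (m - 1) * (i + 1) : ℕ) : ℚ) := by
          push_cast [Nat.cast_sub hmle, Nat.cast_sub (by omega : 1 ≤ m)]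
          ring
        have hxn0 : n - (m - 1) * (i + 1) ≠ 0 := Nat.pos_iff_ne_zero.mp hxpos
        have hxne : ((n : ℚ) - ((m : ℚ) - 1) * ((i : ℚ) + 1)) ≠ 0 := by
          rw [hxq]
          exact_mod_cast hxn0
        have hxz : (n : ℤ) - ((m : ℤ) - 1) * ((i : ℤ) + 1) = ((n - (m - 1) * (i + 1) : ℕ) : ℤ) := by
          push_cast [Nat.cast_sub hmle, Nat.cast_sub (by omega : 1 ≤ m)]
          ring
        show ((n : ℚ) / ((n : ℚ) - ((m : ℚ) - 1) * (((i : ℕ) + 1 : ℕ) : ℚ)))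
            * (Nat.choose (n - (m - 1) * (i + 1)) (i + 1) : ℚ)
          = Bq ((n : ℤ) - ((m : ℤ) - 1) * ((i : ℕ) + 1)) (i + 1)
            + ((m : ℚ) - 1) * Bq ((n : ℤ) - ((m : ℤ) - 1) * ((i : ℕ) + 1) - 1) i
        have hBC : (Nat.choose (n - (m - 1) * (i + 1)) (i + 1) : ℚ)
            = Bq ((n : ℤ) - ((m : ℤ) - 1) * ((i : ℕ) + 1)) (i + 1) := by
          rw [show (n : ℤ) - ((m : ℤ) - 1) * ((i : ℕ) + 1) = ((n - (m - 1) * (i + 1) : ℕ) : ℤ) from by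
            push_cast at hxz ⊢; linarith [hxz]]
          rw [Bq_natCast]
        rw [hBC]
        rw [Bq_succ ((n : ℤ) - ((m : ℤ) - 1) * ((i : ℕ) + 1)) i]
        have hcast : ((((n : ℤ) - ((m : ℤ) - 1) * ((i : ℕ) + 1)) : ℤ) : ℚ)
            = (n : ℚ) - ((m : ℚ) - 1) * ((i : ℚ) + 1) := by push_cast; ring
        rw [hcast]
        have hi1 : ((i : ℚ) + 1) ≠ 0 := by positivity
        push_cast
        field_simp
        ring
  rw [← hA]
  push_cast
  ring
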